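/- arXiv:2312.04478 — 2 statements merged into one kernel-verified Lean document; each statement's English description precedes it below -/
import Mathlib

section
/- For every ε ∈ (0, π) there exists δ > 0, depending only on ε, such that |E(s, y)| = |exp(−y s) − exp(−y √(λ + s²))| ≤ 2 e^{−δ s y} for all λ ∈ Σ_ε and all real s, y ≥ 0. -/
/-!
Both exponentials are bounded by `exp (-y Re w)` with `w = s` or `w = √(λ + s²)`, so it suffices
to bound `Re √(λ + s²)` below by a multiple of `s`. Since `2 (Re √z)² = ‖z‖ + Re z`, this reduces to
`s² sin² ε ≤ ‖λ + s²‖ + Re (λ + s²)`, an elementary inequality once the sector condition is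
written as `Re λ ≥ -‖λ‖ cos ε`. This gives `δ = sin ε / 2`.
-/

open MeasureTheory Real

/-- Principal complex square root `√z = z^(1/2)` (principal branch of `cpow`). -/
noncomputable def csqrt (z : ℂ) : ℂ := z ^ (1/2 : ℂ)

/-- The sector `Σ_ε = {λ ∈ ℂ : λ ≠ 0, |Arg λ| < π − ε}`. -/
def SigmaSector (ε : ℝ) : Set ℂ := {l : ℂ | l ≠ 0 ∧ |l.arg| < Real.pi - ε}

/-- Mikhlin condition (M) with constant `cbar`, with `K = ⌊(d+1)/2⌋`. -/
def CondM (d : ℕ) (m : EuclideanSpace ℝ (Fin (d-1)) → ℂ) (cbar : ℝ) : Prop :=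
  ContDiffOn ℝ ((d+1)/2 : ℕ) m {ξ : EuclideanSpace ℝ (Fin (d-1)) | ξ ≠ 0} ∧
  ∀ k : ℕ, k ≤ (d+1)/2 → ∀ ξ : EuclideanSpace ℝ (Fin (d-1)), ξ ≠ 0 →
    ‖ξ‖ ^ k * ‖iteratedFDerivWithin ℝ k m
        {ξ : EuclideanSpace ℝ (Fin (d-1)) | ξ ≠ 0} ξ‖ ≤ cbar

/-- Parameterized Mikhlin condition (M*) with constants `(cbar, δ)`, `K = ⌊(d+1)/2⌋`. -/
def CondMStar (d : ℕ) (m : EuclideanSpace ℝ (Fin (d-1)) → ℝ → ℂ) (cbar δ : ℝ) : Prop :=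
  (∀ y : ℝ, 0 ≤ y →
    ContDiffOn ℝ ((d+1)/2 : ℕ) (fun ξ => m ξ y)
      {ξ : EuclideanSpace ℝ (Fin (d-1)) | ξ ≠ 0}) ∧
  ∀ k : ℕ, k ≤ (d+1)/2 →
    ∀ ξ : EuclideanSpace ℝ (Fin (d-1)), ξ ≠ 0 → ∀ y : ℝ, 0 ≤ y →
      ‖ξ‖ ^ k * ‖iteratedFDerivWithin ℝ k (fun ξ => m ξ y)
          {ξ : EuclideanSpace ℝ (Fin (d-1)) | ξ ≠ 0} ξ‖ ≤
        cbar * Real.exp (-δ * ‖ξ‖ * y) / (1 + y)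

/-- The fundamental multiplier `m₀(s, y)`. -/
noncomputable def m0 (l : ℂ) (α : ℝ) (s y : ℝ) : ℂ :=
  ((csqrt (l + (s:ℂ)^2) + s) / ((α:ℂ) + l + csqrt (l + (s:ℂ)^2) + s)) *
    ((Complex.exp (-(y:ℂ) * csqrt (l + (s:ℂ)^2)) - Complex.exp (-(y:ℂ) * s)) / l)

/-- `E(s, y) = e^{-ys} - e^{-y√(λ+s²)}`. -/
noncomputable def Efun (l : ℂ) (s y : ℝ) : ℂ :=
  Complex.exp (-(y:ℂ) * s) - Complex.exp (-(y:ℂ) * csqrt (l + (s:ℂ)^2))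

lemma re_csqrt (z : ℂ) : (csqrt z).re = √((‖z‖ + z.re) / 2) := by
  rw [csqrt, one_div]
  exact Complex.cpow_inv_two_re z

lemma neg_norm_mul_cos_le_re {l : ℂ} {ε : ℝ} (hε : 0 ≤ ε) (hl : |l.arg| ≤ π - ε) :
    -(‖l‖ * cos ε) ≤ l.re := by
  have hcos : cos (π - ε) ≤ cos l.arg := by
    rw [← cos_abs l.arg]
    exact cos_le_cos_of_nonneg_of_le_pi (abs_nonneg _) (by linarith) hl
  rw [cos_pi_sub] at hcos
  rw [← Complex.norm_mul_cos_arg l]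
  nlinarith [norm_nonneg l]

lemma mul_sin_sq_le_norm_add_re {l : ℂ} {ε t : ℝ} (hl : -(‖l‖ * cos ε) ≤ l.re) (ht : 0 ≤ t) :
    t * sin ε ^ 2 ≤ ‖l + t‖ + (l + t).re := by
  set k := cos ε
  have hsin : sin ε ^ 2 = 1 - k ^ 2 := by rw [sin_sq]
  have hk : k ^ 2 ≤ 1 := cos_sq_le_one ε
  have hre : (l + t).re = l.re + t := by simp
  rw [hsin, hre]
  -- The goal says `-(l.re + t k²) ≤ ‖l + t‖`; when the left side is positive, compare squares.
  rcases le_or_gt 0 (l.re + t * k ^ 2) with hpos | hneg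
  · nlinarith [norm_nonneg (l + t)]
  · have hlre : l.re < 0 := by nlinarith
    have hk0 : 0 < k := by nlinarith [norm_nonneg l]
    have hl2 : ‖l‖ ^ 2 = l.re ^ 2 + l.im ^ 2 := by
      rw [Complex.sq_norm, Complex.normSq_apply]; ring
    have hz2 : ‖l + t‖ ^ 2 = (l.re + t) ^ 2 + l.im ^ 2 := by
      rw [Complex.sq_norm, Complex.normSq_apply]
      simp only [Complex.add_re, Complex.ofReal_re, Complex.add_im, Complex.ofReal_im, add_zero]
      ring
    have him : l.re ^ 2 * (1 - k ^ 2) ≤ l.im ^ 2 * k ^ 2 := by nlinarith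
    have hsq : (l.re + t * k ^ 2) ^ 2 * k ^ 2 ≤ ‖l + t‖ ^ 2 * k ^ 2 := by
      nlinarith [sq_nonneg (l.re + t * k ^ 2), sq_nonneg (t * k)]
    have := (abs_le_of_sq_le_sq' (le_of_mul_le_mul_right hsq (by positivity)) (norm_nonneg _)).1
    linarith

lemma sin_div_two_mul_le_re_csqrt {l : ℂ} {ε : ℝ} (hε : 0 ≤ ε) (hl : |l.arg| ≤ π - ε)
    (s : ℝ) : sin ε / 2 * s ≤ (csqrt (l + (s : ℂ) ^ 2)).re := by
  have key := mul_sin_sq_le_norm_add_re (t := s ^ 2) (neg_norm_mul_cos_le_re hε hl) (sq_nonneg s)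
  push_cast at key
  rw [re_csqrt]
  apply Real.le_sqrt_of_sq_le
  nlinarith [sq_nonneg s, sq_nonneg (sin ε)]

lemma norm_cexp_neg_mul_le {w : ℂ} {c y : ℝ} (hy : 0 ≤ y) (hw : c ≤ w.re) :
    ‖Complex.exp (-(y : ℂ) * w)‖ ≤ Real.exp (-c * y) := by
  rw [Complex.norm_exp, Real.exp_le_exp]
  simp only [neg_mul, Complex.neg_re, Complex.re_ofReal_mul]
  nlinarith

/-- `|E(s,y)| ≤ 2 e^{-δ s y}` on the sector. -/
theorem stmt_7 (ε : ℝ) (hε : ε ∈ Set.Ioo 0 Real.pi) :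
    ∃ δ : ℝ, 0 < δ ∧ ∀ l ∈ SigmaSector ε, ∀ s y : ℝ, 0 ≤ s → 0 ≤ y →
      ‖Efun l s y‖ ≤ 2 * Real.exp (-δ * s * y) := by
  obtain ⟨hε0, hεπ⟩ := hε
  refine ⟨sin ε / 2, by linarith [sin_pos_of_pos_of_lt_pi hε0 hεπ], ?_⟩
  rintro l ⟨-, hl⟩ s y hs hy
  have hδs : sin ε / 2 * s ≤ (s : ℂ).re := by
    rw [Complex.ofReal_re]
    nlinarith [sin_le_one ε]
  have hδ := sin_div_two_mul_le_re_csqrt hε0.le hl.le s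
  calc ‖Efun l s y‖
      ≤ ‖Complex.exp (-(y : ℂ) * s)‖ + ‖Complex.exp (-(y : ℂ) * csqrt (l + (s : ℂ) ^ 2))‖ :=
        norm_sub_le _ _
    _ ≤ Real.exp (-(sin ε / 2 * s) * y) + Real.exp (-(sin ε / 2 * s) * y) :=
        add_le_add (norm_cexp_neg_mul_le hy hδs) (norm_cexp_neg_mul_le hy hδ)
    _ = 2 * Real.exp (-(sin ε / 2) * s * y) := by ring_nf
end

section
/- For every ε ∈ (0, π) and ω > 0 there exist constants C, δ > 0, depending only on ε and ω, such that (1 + y) s |d/ds (s E(s, y))| ≤ C √|λ| e^{−δ s y} for all λ ∈ Σ_ε with |λ| ≥ ω, all s > 0 and all y ≥ 0. -/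
open MeasureTheory Real

/-! Write `w = √(λ + s²)`. From `w² = λ + s²` one gets `2 (Re w)² = |λ + s²| + Re (λ + s²)`, and in
the sector `Re λ ≥ -cos ε |λ|`, which forces `Re w ≥ c (s + √|λ|)` with `c` depending on `ε` only.
Since `(w - s)(w + s) = λ`, also `|w - s| ≤ √|λ| / c`. Differentiating,
`d/ds (s E) = (1 - s y) E + y s ((s - w) / w) e^{-y w}`; the mean value theorem bounds `|E|` by
`min (2, y |w - s|) e^{-c s y}`, and the remaining polynomial factors in `s y` are absorbed by
halving the exponential rate. -/

theorem norm_exp_neg_sub_exp_neg_le {u v : ℂ} {m : ℝ} (hu : m ≤ u.re) (hv : m ≤ v.re) :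
    ‖Complex.exp (-u) - Complex.exp (-v)‖ ≤ Real.exp (-m) * ‖u - v‖ := by
  refine (convex_halfSpace_re_ge m).norm_image_sub_le_of_norm_hasDerivWithin_le
    (f := fun z => Complex.exp (-z)) (f' := fun z => -Complex.exp (-z))
    (fun z _ => ?_) (fun z hz => ?_) hv hu
  · simpa using (hasDerivAt_id z).neg.cexp.hasDerivWithinAt
  · simpa [Complex.norm_exp] using hz

theorem two_mul_re_sq_of_sq_eq {w z : ℂ} (h : w ^ 2 = z) : 2 * w.re ^ 2 = ‖z‖ + z.re := by
  rw [← h, norm_pow, Complex.sq_norm, Complex.normSq_apply, pow_two w, Complex.mul_re]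
  ring

theorem mem_slitPlane_of_sq_eq {w z : ℂ} (h : w ^ 2 = z) (hw : w.re ≠ 0) :
    z ∈ Complex.slitPlane := by
  by_contra hz
  rw [Complex.mem_slitPlane_iff] at hz
  push Not at hz
  have hnorm : ‖z‖ = -z.re := by
    rw [← Complex.re_add_im z, hz.2]
    simp [abs_of_nonpos hz.1]
  have := two_mul_re_sq_of_sq_eq h
  exact hw (by nlinarith)

theorem sq_csqrt (z : ℂ) : csqrt z ^ 2 = z := by
  simp [csqrt]

theorem csqrt_ne_zero {z : ℂ} (hz : z ≠ 0) : csqrt z ≠ 0 := fun h => hz <| by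
  rw [← sq_csqrt z, h, zero_pow two_ne_zero]

theorem re_csqrt_nonneg (z : ℂ) : 0 ≤ (csqrt z).re := by
  rcases eq_or_ne z 0 with rfl | hz
  · simp [csqrt]
  rw [csqrt, Complex.cpow_def_of_ne_zero hz, Complex.exp_re]
  refine mul_nonneg (Real.exp_pos _).le (Real.cos_nonneg_of_mem_Icc ⟨?_, ?_⟩)
  · simp [Complex.log_im]
    linarith [Complex.neg_pi_lt_arg z]
  · simp [Complex.log_im]
    linarith [Complex.arg_le_pi z]

theorem norm_add_re_ge_of_sector {l : ℂ} {κ t : ℝ} (hκ : |κ| ≤ 1) (hl : -κ * ‖l‖ ≤ l.re)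
    (ht : 0 ≤ t) : (1 - κ) / 4 * (‖l‖ + t) ≤ ‖l + t‖ + (l + t).re := by
  obtain ⟨hκ₀, hκ₁⟩ := abs_le.1 hκ
  have h₁ : ‖l‖ - t ≤ ‖l + t‖ := by
    simpa [abs_of_nonneg ht] using norm_sub_le_norm_add l (t : ℂ)
  have h₂ : (l + t).re ≤ ‖l + t‖ := Complex.re_le_norm _
  simp only [Complex.add_re, Complex.ofReal_re] at h₂ ⊢
  -- a `κ`-dependent convex combination of `h₁` and `h₂`, weighted `(3 + κ) / 4` and `(1 - κ) / 4`
  linarith [mul_nonneg (by linarith : 0 ≤ 3 + κ) (by linarith : 0 ≤ ‖l + t‖ - ‖l‖ + t),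
    mul_nonneg (by linarith : 0 ≤ 1 - κ) (by linarith : 0 ≤ ‖l + t‖ - l.re - t),
    mul_nonneg (by linarith : 0 ≤ 5 - κ) (by linarith : 0 ≤ l.re + κ * ‖l‖),
    mul_nonneg (mul_nonneg (by linarith : 0 ≤ 1 - κ) (by linarith : 0 ≤ 2 - κ)) (norm_nonneg l),
    mul_nonneg (by linarith : 0 ≤ 1 - κ) ht]

theorem re_csqrt_add_sq_ge {l : ℂ} {κ s : ℝ} (hκ : |κ| ≤ 1) (hl : -κ * ‖l‖ ≤ l.re) :
    √(1 - κ) / 4 * (s + √‖l‖) ≤ (csqrt (l + (s : ℂ) ^ 2)).re := by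
  have hsector := norm_add_re_ge_of_sector hκ hl (sq_nonneg s)
  have hre := two_mul_re_sq_of_sq_eq (sq_csqrt (l + (s : ℂ) ^ 2))
  push_cast at hsector
  have hκ₁ : 0 ≤ 1 - κ := by linarith [(abs_le.1 hκ).2]
  have hsq : (s + √‖l‖) ^ 2 ≤ 2 * (‖l‖ + s ^ 2) := by
    nlinarith [sq_nonneg (s - √‖l‖), Real.sq_sqrt (norm_nonneg l)]
  refine le_of_sq_le_sq ?_ (re_csqrt_nonneg _)
  rw [mul_pow, div_pow, Real.sq_sqrt hκ₁]
  nlinarith [mul_le_mul_of_nonneg_left hsq hκ₁]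

theorem neg_cos_mul_norm_le_re_of_mem_sigmaSector {ε : ℝ} (hε : 0 ≤ ε) {l : ℂ}
    (hl : l ∈ SigmaSector ε) : -Real.cos ε * ‖l‖ ≤ l.re := by
  obtain ⟨hl₀, harg⟩ := hl
  have hcos : Real.cos (Real.pi - ε) ≤ Real.cos l.arg := by
    rw [← Real.cos_abs l.arg]
    exact Real.cos_le_cos_of_nonneg_of_le_pi (abs_nonneg _) (by linarith) harg.le
  rw [Real.cos_pi_sub, Complex.cos_arg hl₀] at hcos
  have hnorm : 0 < ‖l‖ := norm_pos_iff.2 hl₀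
  rwa [le_div_iff₀ hnorm] at hcos

theorem norm_sub_le_of_sq_eq {l w : ℂ} {c s : ℝ} (hl : l ≠ 0) (hc : 0 < c) (hs : 0 ≤ s)
    (hw : w ^ 2 = l + (s : ℂ) ^ 2) (hre : c * (s + √‖l‖) ≤ w.re) :
    ‖w - s‖ ≤ √‖l‖ / c := by
  have ha : 0 < √‖l‖ := Real.sqrt_pos.2 (norm_pos_iff.2 hl)
  have hprod : ‖w - s‖ * ‖w + s‖ = √‖l‖ ^ 2 := by
    rw [← norm_mul, Real.sq_sqrt (norm_nonneg l), show (w - s) * (w + s) = l by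
      linear_combination hw]
  have hplus : c * √‖l‖ ≤ ‖w + s‖ := by
    have := Complex.re_le_norm (w + s)
    simp only [Complex.add_re, Complex.ofReal_re] at this
    nlinarith
  rw [le_div_iff₀ hc]
  nlinarith [mul_le_mul_of_nonneg_left hplus (norm_nonneg (w - s))]

theorem hasDerivAt_csqrt_add_sq {l : ℂ} {s : ℝ} (hz : l + (s : ℂ) ^ 2 ∈ Complex.slitPlane) :
    HasDerivAt (fun t : ℝ => csqrt (l + (t : ℂ) ^ 2)) (s / csqrt (l + (s : ℂ) ^ 2)) s := by
  have hsq : HasDerivAt (fun t : ℝ => l + (t : ℂ) ^ 2) (2 * s) s := by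
    simpa using ((hasDerivAt_id s).ofReal_comp.pow 2).const_add l
  have hz₀ := Complex.slitPlane_ne_zero hz
  refine ((Complex.hasStrictDerivAt_cpow_const (c := 1 / 2) hz).hasDerivAt.comp s hsq
    ).congr_deriv ?_
  have hw₀ := csqrt_ne_zero hz₀
  rw [Complex.cpow_sub _ _ hz₀, Complex.cpow_one]
  nth_rewrite 2 [← sq_csqrt (l + (s : ℂ) ^ 2)]
  rw [csqrt] at hw₀ ⊢
  field_simp

theorem hasDerivAt_mul_Efun {l : ℂ} {s : ℝ} (y : ℝ) (hz : l + (s : ℂ) ^ 2 ∈ Complex.slitPlane) :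
    HasDerivAt (fun t : ℝ => (t : ℂ) * Efun l t y)
      ((1 - s * y) * Efun l s y +
        y * s * ((s - csqrt (l + (s : ℂ) ^ 2)) / csqrt (l + (s : ℂ) ^ 2)) *
          Complex.exp (-y * csqrt (l + (s : ℂ) ^ 2))) s := by
  have hw₀ := csqrt_ne_zero (Complex.slitPlane_ne_zero hz)
  have ht : HasDerivAt (fun t : ℝ => (t : ℂ)) 1 s := (hasDerivAt_id s).ofReal_comp
  have hE := ((ht.const_mul (-(y : ℂ))).cexp).sub
    ((hasDerivAt_csqrt_add_sq hz).const_mul (-(y : ℂ))).cexp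
  refine (ht.mul hE).congr_deriv ?_
  simp only [Efun, Pi.sub_apply]
  field_simp
  ring

theorem exists_re_csqrt_add_sq_ge {ε : ℝ} (hε : ε ∈ Set.Ioo 0 Real.pi) :
    ∃ c, 0 < c ∧ c ≤ 1 ∧ ∀ l ∈ SigmaSector ε, ∀ s : ℝ,
      c * (s + √‖l‖) ≤ (csqrt (l + (s : ℂ) ^ 2)).re := by
  have hcos : Real.cos ε < 1 := by
    simpa using Real.cos_lt_cos_of_nonneg_of_le_pi le_rfl hε.2.le hε.1
  refine ⟨√(1 - Real.cos ε) / 4, by positivity, ?_, fun l hl s =>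
    re_csqrt_add_sq_ge (abs_le.2 ⟨Real.neg_one_le_cos ε, Real.cos_le_one ε⟩)
      (neg_cos_mul_norm_le_re_of_mem_sigmaSector hε.1.le hl)⟩
  rw [div_le_one (by norm_num), Real.sqrt_le_left (by norm_num)]
  linarith [Real.neg_one_le_cos ε]

theorem one_add_mul_exp_neg_le {k y : ℝ} (hk : 0 < k) (hy : 0 ≤ y) :
    (1 + y) * Real.exp (-k * y) ≤ 1 + 1 / k := by
  have h₁ : Real.exp (-k * y) ≤ 1 := Real.exp_le_one_iff.2 (by nlinarith)
  have h₂ : k * y * Real.exp (-k * y) ≤ 1 := by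
    calc k * y * Real.exp (-k * y) ≤ Real.exp (k * y) * Real.exp (-k * y) := by
          gcongr; linarith [Real.add_one_le_exp (k * y)]
      _ = 1 := by rw [← Real.exp_add]; simp
  have h₃ : y * Real.exp (-k * y) ≤ 1 / k := by
    rw [le_div_iff₀ hk]; linarith
  linarith

theorem mul_one_add_mul_exp_neg_le {δ t : ℝ} (hδ : 0 < δ) (ht : 0 ≤ t) :
    t * (1 + t) * Real.exp (-(2 * δ) * t) ≤ (1 / δ + 2 / δ ^ 2) * Real.exp (-δ * t) := by
  have h₁ : t ≤ Real.exp (δ * t) / δ := by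
    rw [le_div_iff₀ hδ]
    linarith [Real.add_one_le_exp (δ * t)]
  have h₂ : t ^ 2 ≤ 2 * Real.exp (δ * t) / δ ^ 2 := by
    have := Real.pow_div_factorial_le_exp _ (mul_nonneg hδ.le ht) 2
    rw [le_div_iff₀ (by positivity)]
    norm_num at this
    linarith
  have hpoly : t * (1 + t) ≤ (1 / δ + 2 / δ ^ 2) * Real.exp (δ * t) := by
    rw [add_mul, one_div_mul_eq_div, div_mul_eq_mul_div]
    linarith
  calc t * (1 + t) * Real.exp (-(2 * δ) * t)
      ≤ (1 / δ + 2 / δ ^ 2) * Real.exp (δ * t) * Real.exp (-(2 * δ) * t) := by gcongr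
    _ = (1 / δ + 2 / δ ^ 2) * Real.exp (-δ * t) := by
      rw [mul_assoc, ← Real.exp_add]; ring_nf

section Estimates

variable {w : ℂ} {a b c s y : ℝ}

theorem one_add_mul_norm_exp_sub_exp_le (hc : 0 < c) (hc₁ : c ≤ 1) (hb : 0 < b) (hba : b ≤ a)
    (hs : 0 ≤ s) (hy : 0 ≤ y) (hre : c * (s + a) ≤ w.re) (hws : ‖w - s‖ ≤ a / c) :
    (1 + y) * ‖Complex.exp (-y * s) - Complex.exp (-y * w)‖ ≤
      (2 / c + 4 / b) * a * y * Real.exp (-(c * (s * y))) := by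
  have ha : 0 < a := hb.trans_le hba
  have hre_s : c * (s * y) ≤ ((y : ℂ) * s).re := by
    simp only [← Complex.ofReal_mul, Complex.ofReal_re]
    nlinarith [mul_nonneg hs hy]
  have hre_w : c * (s * y) ≤ ((y : ℂ) * w).re := by
    simp only [Complex.re_ofReal_mul]
    nlinarith [mul_nonneg hc.le (mul_nonneg ha.le hy)]
  have hnorm_exp {u : ℂ} (hu : c * (s * y) ≤ u.re) :
      ‖Complex.exp (-u)‖ ≤ Real.exp (-(c * (s * y))) := by
    rw [Complex.norm_exp, Complex.neg_re]
    exact Real.exp_le_exp.2 (neg_le_neg hu)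
  simp only [neg_mul]
  set e := Real.exp (-(c * (s * y)))
  have hsmall : ‖Complex.exp (-(y * s)) - Complex.exp (-(y * w))‖ ≤ e * (y * (a / c)) := by
    refine (norm_exp_neg_sub_exp_neg_le hre_s hre_w).trans ?_
    rw [← mul_sub, norm_mul, Complex.norm_real, Real.norm_of_nonneg hy, norm_sub_rev]
    gcongr
  have hlarge : ‖Complex.exp (-(y * s)) - Complex.exp (-(y * w))‖ ≤ 2 * e :=
    (norm_sub_le _ _).trans (by linarith [hnorm_exp hre_s, hnorm_exp hre_w])
  have he : 0 ≤ e := (Real.exp_pos _).le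
  rcases le_total y 1 with hy₁ | hy₁
  · calc (1 + y) * ‖Complex.exp (-(y * s)) - Complex.exp (-(y * w))‖
        ≤ 2 * (e * (y * (a / c))) := by gcongr; linarith
      _ = 2 / c * a * y * e := by ring
      _ ≤ (2 / c + 4 / b) * a * y * e := by gcongr; linarith [div_pos four_pos hb]
  · calc (1 + y) * ‖Complex.exp (-(y * s)) - Complex.exp (-(y * w))‖
        ≤ (2 * y) * (2 * e) := by gcongr; linarith
      _ ≤ 4 * (a / b) * y * e := by
        have hab : 1 ≤ a / b := (one_le_div hb).2 hba
        nlinarith [mul_nonneg hy he]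
      _ = 4 / b * a * y * e := by ring
      _ ≤ (2 / c + 4 / b) * a * y * e := by gcongr; linarith [div_pos two_pos hc]

theorem one_add_mul_mul_norm_correction_le (hc : 0 < c) (hb : 0 < b) (hba : b ≤ a)
    (hs : 0 < s) (hy : 0 ≤ y) (hre : c * (s + a) ≤ w.re) (hws : ‖w - s‖ ≤ a / c) :
    (1 + y) * s * ‖y * s * ((s - w) / w) * Complex.exp (-y * w)‖ ≤
      (1 + 1 / (c * b)) / c ^ 2 * a * (s * y) * Real.exp (-(c * (s * y))) := by
  have ha : 0 < a := hb.trans_le hba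
  have hw : c * s ≤ ‖w‖ := by nlinarith [Complex.re_le_norm w]
  have hexp : ‖Complex.exp (-y * w)‖ ≤ Real.exp (-(c * (s * y))) * Real.exp (-(c * a) * y) := by
    rw [Complex.norm_exp, ← Real.exp_add]
    simp only [neg_mul, Complex.neg_re, Complex.re_ofReal_mul]
    exact Real.exp_le_exp.2 (by nlinarith)
  have hdecay : (1 + y) * Real.exp (-(c * a) * y) ≤ 1 + 1 / (c * b) :=
    (one_add_mul_exp_neg_le (by positivity) hy).trans (by gcongr)
  have hratio : ‖((s : ℂ) - w) / w‖ ≤ a / c / (c * s) := by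
    rw [norm_div, norm_sub_rev]
    exact div_le_div₀ (by positivity) hws (by positivity) hw
  rw [norm_mul, norm_mul, norm_mul, Complex.norm_real, Complex.norm_real, Real.norm_of_nonneg hy,
    Real.norm_of_nonneg hs.le]
  calc (1 + y) * s * (y * s * ‖((s : ℂ) - w) / w‖ * ‖Complex.exp (-y * w)‖)
      ≤ (1 + y) * s * (y * s * (a / c / (c * s)) *
          (Real.exp (-(c * (s * y))) * Real.exp (-(c * a) * y))) := by gcongr
    _ = a / c ^ 2 * (s * y) * Real.exp (-(c * (s * y))) *
          ((1 + y) * Real.exp (-(c * a) * y)) := by field_simp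
    _ ≤ a / c ^ 2 * (s * y) * Real.exp (-(c * (s * y))) * (1 + 1 / (c * b)) := by gcongr
    _ = _ := by ring

theorem one_add_mul_mul_norm_deriv_formula_le (hc : 0 < c) (hc₁ : c ≤ 1) (hb : 0 < b)
    (hba : b ≤ a) (hs : 0 < s) (hy : 0 ≤ y) (hre : c * (s + a) ≤ w.re) (hws : ‖w - s‖ ≤ a / c) :
    (1 + y) * s * ‖(1 - s * y) * (Complex.exp (-y * s) - Complex.exp (-y * w)) +
        y * s * ((s - w) / w) * Complex.exp (-y * w)‖ ≤
      (2 / c + 4 / b + (1 + 1 / (c * b)) / c ^ 2) * (2 / c + 8 / c ^ 2) * a *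
        Real.exp (-(c / 2) * s * y) := by
  have hE := one_add_mul_norm_exp_sub_exp_le hc hc₁ hb hba hs.le hy hre hws
  have hB := one_add_mul_mul_norm_correction_le hc hb hba hs hy hre hws
  have hfactor : ‖(1 : ℂ) - s * y‖ ≤ 1 + s * y := by
    refine (norm_sub_le _ _).trans ?_
    rw [norm_one, ← Complex.ofReal_mul, Complex.norm_real, Real.norm_of_nonneg (by positivity)]
  have hpoly : s * y * (1 + s * y) * Real.exp (-(c * (s * y))) ≤
      (2 / c + 8 / c ^ 2) * Real.exp (-(c / 2) * s * y) := by
    convert mul_one_add_mul_exp_neg_le (half_pos hc) (mul_nonneg hs.le hy) using 2 <;> ring_nf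
  set A := 2 / c + 4 / b
  set B := (1 + 1 / (c * b)) / c ^ 2
  have hB₀ : 0 ≤ B := by positivity
  have ha : 0 ≤ a := hb.le.trans hba
  calc (1 + y) * s * ‖(1 - s * y) * (Complex.exp (-y * s) - Complex.exp (-y * w)) +
        y * s * ((s - w) / w) * Complex.exp (-y * w)‖
      ≤ (1 + y) * s * (‖(1 - s * y) * (Complex.exp (-y * s) - Complex.exp (-y * w))‖ +
          ‖y * s * ((s - w) / w) * Complex.exp (-y * w)‖) := by gcongr; exact norm_add_le _ _
    _ = s * ‖(1 : ℂ) - s * y‖ * ((1 + y) * ‖Complex.exp (-y * s) - Complex.exp (-y * w)‖) +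
          (1 + y) * s * ‖y * s * ((s - w) / w) * Complex.exp (-y * w)‖ := by
        rw [norm_mul]; ring
    _ ≤ s * (1 + s * y) * (A * a * y * Real.exp (-(c * (s * y)))) +
          B * a * (s * y) * Real.exp (-(c * (s * y))) := by gcongr
    _ = a * (A * (s * y * (1 + s * y)) + B * (s * y)) * Real.exp (-(c * (s * y))) := by ring
    _ ≤ a * ((A + B) * (s * y * (1 + s * y))) * Real.exp (-(c * (s * y))) := by
        gcongr
        nlinarith [mul_nonneg hB₀ (sq_nonneg (s * y))]
    _ = (A + B) * a * (s * y * (1 + s * y) * Real.exp (-(c * (s * y)))) := by ring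
    _ ≤ (A + B) * a * ((2 / c + 8 / c ^ 2) * Real.exp (-(c / 2) * s * y)) := by gcongr
    _ = _ := by ring

end Estimates

/-- `(1+y) s |d/ds (s E(s,y))| ≤ C √|λ| e^{-δ s y}`. -/
theorem stmt_14 (ε ω : ℝ) (hε : ε ∈ Set.Ioo 0 Real.pi) (hω : 0 < ω) :
    ∃ C δ : ℝ, 0 < C ∧ 0 < δ ∧
      ∀ l ∈ SigmaSector ε, ω ≤ ‖l‖ → ∀ s y : ℝ, 0 < s → 0 ≤ y →
        (1 + y) * s *
            ‖deriv (fun t : ℝ => (t:ℂ) * Efun l t y) s‖ ≤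
          C * Real.sqrt ‖l‖ * Real.exp (-δ * s * y) := by
  obtain ⟨c, hc, hc₁, hre⟩ := exists_re_csqrt_add_sq_ge hε
  have hb : 0 < √ω := Real.sqrt_pos.2 hω
  refine ⟨(2 / c + 4 / √ω + (1 + 1 / (c * √ω)) / c ^ 2) * (2 / c + 8 / c ^ 2), c / 2,
    by positivity, by positivity, fun l hl hωl s y hs hy => ?_⟩
  have hw := hre l hl s
  have hslit : l + (s : ℂ) ^ 2 ∈ Complex.slitPlane :=
    mem_slitPlane_of_sq_eq (sq_csqrt _) (by nlinarith [Real.sqrt_nonneg ‖l‖])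
  rw [(hasDerivAt_mul_Efun y hslit).deriv]
  exact one_add_mul_mul_norm_deriv_formula_le hc hc₁ hb (Real.sqrt_le_sqrt hωl) hs hy hw
    (norm_sub_le_of_sq_eq hl.1 hc hs.le (sq_csqrt _) hw)
end
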